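/- If G is a finite simple graph on n ≥ 5 vertices containing a vertex of degree at least 3, then m(G) ≤ ℓ(n − 1) + ℓ(n − 4). -/

import Mathlib

def ProdOfSum (n m : ℕ) : Prop :=
  ∃ l : List ℕ, l ≠ [] ∧ (∀ a ∈ l, 0 < a) ∧ l.sum = n ∧ l.prod = m

noncomputable def ell (n : ℕ) : ℕ := sSup {m | ProdOfSum n m}

lemma list_prod_le_two_pow_sum (l : List ℕ) : l.prod ≤ 2 ^ l.sum := by
  induction l with
  | nil => simp
  | cons a l ih =>
    simp only [List.prod_cons, List.sum_cons, pow_add]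
    exact Nat.mul_le_mul (Nat.lt_two_pow_self (n := a)).le ih

lemma prodOfSum_bddAbove (n : ℕ) : BddAbove {m | ProdOfSum n m} := by
  refine ⟨2 ^ n, fun m hm => ?_⟩
  obtain ⟨l, -, -, hs, hp⟩ := hm
  rw [← hp, ← hs]; exact list_prod_le_two_pow_sum l

lemma le_ell {n m : ℕ} (h : ProdOfSum n m) : m ≤ ell n :=
  le_csSup (prodOfSum_bddAbove n) h

lemma ell_spec {n : ℕ} (hn : 1 ≤ n) : ProdOfSum n (ell n) := by
  have hne : Set.Nonempty {m | ProdOfSum n m} :=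
    ⟨n, ⟨[n], by simp, by simp; omega, by simp, by simp⟩⟩
  exact Nat.sSup_mem hne (prodOfSum_bddAbove n)

lemma self_le_ell {n : ℕ} (hn : 1 ≤ n) : n ≤ ell n :=
  le_ell ⟨[n], by simp, by simp; omega, by simp, by simp⟩

lemma mul_ell_le {n k : ℕ} (hn : 1 ≤ n) (hk : 1 ≤ k) : k * ell n ≤ ell (n + k) := by
  obtain ⟨l, hne, hpos, hs, hp⟩ := ell_spec hn
  refine le_ell ⟨k :: l, by simp, ?_, by simp [hs, Nat.add_comm], by simp [hp]⟩
  intro a ha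
  rcases List.mem_cons.1 ha with rfl | h
  · exact hk
  · exact hpos a h

lemma ell_mono {a b : ℕ} (ha : 1 ≤ a) (hab : a ≤ b) : ell a ≤ ell b := by
  obtain ⟨l, hne, hpos, hs, hp⟩ := ell_spec ha
  refine le_ell ⟨l ++ List.replicate (b - a) 1, by simp [hne], ?_, ?_, by simp [hp]⟩
  · intro x hx
    rcases List.mem_append.1 hx with h | h
    · exact hpos x h
    · simp [List.eq_of_mem_replicate h]
  · simp [hs, Nat.add_sub_cancel' hab]

lemma ell_zero : ell 0 = 0 := by
  have : {m | ProdOfSum 0 m} = ∅ := by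
    ext m
    simp only [Set.mem_setOf_eq, Set.mem_empty_iff_false, iff_false]
    rintro ⟨l, hne, hpos, hs, -⟩
    rcases l with - | ⟨a, l⟩
    · exact hne rfl
    · have := hpos a (by simp)
      simp only [List.sum_cons] at hs
      omega
  simp [ell, this]

noncomputable def ellB (n : ℕ) : ℕ := max 1 (ell n)

lemma one_le_ell {n : ℕ} (hn : 1 ≤ n) : 1 ≤ ell n := hn.trans (self_le_ell hn)

lemma ellB_eq {n : ℕ} (hn : 1 ≤ n) : ellB n = ell n := max_eq_right (one_le_ell hn)

lemma ellB_mono {a b : ℕ} (hab : a ≤ b) : ellB a ≤ ellB b := by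
  rcases Nat.eq_zero_or_pos a with rfl | ha
  · simp only [ellB, ell_zero, max_eq_left (Nat.zero_le 1)]
    exact le_max_left _ _
  · rw [ellB_eq ha, ellB_eq (ha.trans_le hab)]
    exact ell_mono ha hab

lemma ellB_le_ell {n : ℕ} (hn : 1 ≤ n) : ellB n ≤ ell n := (ellB_eq hn).le

lemma mul_ellB_le {n k : ℕ} (hk : 1 ≤ k) (hkn : k ≤ n) : k * ellB (n - k) ≤ ell n := by
  rcases Nat.lt_or_ge k n with h | h
  · have h1 : 1 ≤ n - k := Nat.le_sub_of_add_le (by omega)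
    rw [ellB_eq h1]
    have := mul_ell_le (n := n - k) (k := k) h1 hk
    rwa [Nat.sub_add_cancel hkn] at this
  · have : k = n := le_antisymm hkn h
    subst this
    simp only [Nat.sub_self, ellB, ell_zero, Nat.max_eq_left (Nat.zero_le 1), Nat.mul_one]
    exact self_le_ell hk

def IsMaxIndepSet {V : Type*} (G : SimpleGraph V) (I : Set V) : Prop :=
  (∀ x ∈ I, ∀ y ∈ I, ¬ G.Adj x y) ∧
  ∀ J : Set V, (∀ x ∈ J, ∀ y ∈ J, ¬ G.Adj x y) → I ⊆ J → J = I

noncomputable def misCount {V : Type*} (G : SimpleGraph V) : ℕ :=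
  Nat.card {I : Set V // IsMaxIndepSet G I}

lemma isMaxIndepSet_iff {V : Type*} (G : SimpleGraph V) (I : Set V) :
    IsMaxIndepSet G I ↔
      (∀ x ∈ I, ∀ y ∈ I, ¬ G.Adj x y) ∧ ∀ w, w ∉ I → ∃ x ∈ I, G.Adj w x := by
  constructor
  · rintro ⟨hind, hmax⟩
    refine ⟨hind, fun w hw => ?_⟩
    by_contra hno
    push_neg at hno
    have hJ : ∀ x ∈ insert w I, ∀ y ∈ insert w I, ¬ G.Adj x y := by
      rintro x (rfl | hx) y (rfl | hy)
      · simp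
      · exact fun h => hno y hy h
      · exact fun h => hno x hx h.symm
      · exact hind x hx y hy
    have := hmax _ hJ (Set.subset_insert w I)
    exact hw (this ▸ Set.mem_insert w I)
  · rintro ⟨hind, hdom⟩
    refine ⟨hind, fun J hJ hIJ => ?_⟩
    refine Set.Subset.antisymm (fun w hw => ?_) hIJ
    by_contra hwI
    obtain ⟨x, hxI, hadj⟩ := hdom w hwI
    exact hJ w hw x (hIJ hxI) hadj

section
variable {V : Type*} [Fintype V] (G : SimpleGraph V)

/-- MISes avoiding `v` inject into MISes of the graph with `v` deleted. -/
lemma card_mis_avoiding (v : V) :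
    Nat.card {I : Set V // IsMaxIndepSet G I ∧ v ∉ I} ≤
      misCount (G.induce {v}ᶜ) := by
  classical
  refine Nat.card_le_card_of_injective
    (fun p => ⟨Subtype.val ⁻¹' p.1, ?_⟩) ?_
  · obtain ⟨I, hI, hvI⟩ := p
    rw [isMaxIndepSet_iff] at hI ⊢
    obtain ⟨hind, hdom⟩ := hI
    constructor
    · rintro ⟨x, hx⟩ hxI ⟨y, hy⟩ hyI hadj
      exact hind x hxI y hyI hadj
    · rintro ⟨w, hw⟩ hwI
      obtain ⟨x, hxI, hadj⟩ := hdom w hwI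
      have hx : x ∈ ({v}ᶜ : Set V) := by
        simp only [Set.mem_compl_iff, Set.mem_singleton_iff]
        rintro rfl; exact hvI hxI
      exact ⟨⟨x, hx⟩, hxI, hadj⟩
  · rintro ⟨I, hI, hvI⟩ ⟨I', hI', hvI'⟩ h
    simp only [Subtype.mk.injEq] at h ⊢
    ext x
    rcases eq_or_ne x v with rfl | hxv
    · simp [hvI, hvI']
    · have hx : x ∈ ({v}ᶜ : Set V) := by simpa using hxv
      have := Set.ext_iff.1 h ⟨x, hx⟩
      simpa using this

/-- MISes containing `u` inject into MISes of the graph with the closed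
neighborhood of `u` deleted. -/
lemma card_mis_containing (u : V) :
    Nat.card {I : Set V // IsMaxIndepSet G I ∧ u ∈ I} ≤
      misCount (G.induce (G.neighborSet u ∪ {u})ᶜ) := by
  classical
  refine Nat.card_le_card_of_injective
    (fun p => ⟨Subtype.val ⁻¹' p.1, ?_⟩) ?_
  · obtain ⟨I, hI, huI⟩ := p
    rw [isMaxIndepSet_iff] at hI ⊢
    obtain ⟨hind, hdom⟩ := hI
    constructor
    · rintro ⟨x, hx⟩ hxI ⟨y, hy⟩ hyI hadj
      exact hind x hxI y hyI hadj
    · rintro ⟨w, hw⟩ hwI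
      obtain ⟨x, hxI, hadj⟩ := hdom w hwI
      have hxu : x ≠ u := by
        rintro rfl
        simp only [Set.mem_compl_iff, Set.mem_union, SimpleGraph.mem_neighborSet,
          Set.mem_singleton_iff, not_or] at hw
        exact hw.1 hadj.symm
      have hx : x ∈ (G.neighborSet u ∪ {u} : Set V)ᶜ := by
        simp only [Set.mem_compl_iff, Set.mem_union, SimpleGraph.mem_neighborSet,
          Set.mem_singleton_iff, not_or]
        exact ⟨fun hadj' => hind u huI x hxI hadj', hxu⟩
      exact ⟨⟨x, hx⟩, hxI, hadj⟩
  · rintro ⟨I, hI, huI⟩ ⟨I', hI', huI'⟩ h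
    simp only [Subtype.mk.injEq] at h ⊢
    have key : ∀ (J : Set V), IsMaxIndepSet G J → u ∈ J → ∀ x, x ∈ J ↔
        (x = u ∨ (x ∈ (G.neighborSet u ∪ {u} : Set V)ᶜ ∧ x ∈ J)) := by
      intro J hJ huJ x
      constructor
      · intro hxJ
        rcases eq_or_ne x u with rfl | hxu
        · exact Or.inl rfl
        · refine Or.inr ⟨?_, hxJ⟩
          simp only [Set.mem_compl_iff, Set.mem_union, SimpleGraph.mem_neighborSet,
            Set.mem_singleton_iff, not_or]
          exact ⟨fun hadj => hJ.1 u huJ x hxJ hadj, hxu⟩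
      · rintro (rfl | ⟨-, hxJ⟩)
        · exact huJ
        · exact hxJ
    ext x
    rw [key I hI huI x, key I' hI' huI' x]
    rcases eq_or_ne x u with rfl | hxu
    · simp
    · constructor
      · rintro (rfl | ⟨hx, hxI⟩)
        · exact Or.inl rfl
        · exact Or.inr ⟨hx, by have := Set.ext_iff.1 h ⟨x, hx⟩; simpa using this.1 hxI⟩
      · rintro (rfl | ⟨hx, hxI⟩)
        · exact Or.inl rfl
        · exact Or.inr ⟨hx, by have := Set.ext_iff.1 h ⟨x, hx⟩; simpa using this.2 hxI⟩

end

lemma ncard_compl_eq {α : Type*} [Fintype α] (s : Set α) :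
    sᶜ.ncard = Fintype.card α - s.ncard := by
  have h := Set.ncard_add_ncard_compl s
  rw [Nat.card_eq_fintype_card] at h
  omega

lemma fintype_card_coe_eq_ncard {α : Type*} (s : Set α) [Fintype ↥s] :
    Fintype.card ↥s = s.ncard := by
  rw [← Nat.card_eq_fintype_card, Nat.card_coe_set_eq]

/-- Counting by fibers of a classifying map. -/
lemma nat_card_le_sum {α β : Type*} [Finite α] [DecidableEq β]
    (T : Finset β) (c : α → β) (hc : ∀ a, c a ∈ T) (f : β → ℕ)
    (hf : ∀ u ∈ T, Nat.card {a // c a = u} ≤ f u) :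
    Nat.card α ≤ ∑ u ∈ T, f u := by
  classical
  have : Fintype α := Fintype.ofFinite α
  rw [Nat.card_eq_fintype_card, ← Finset.card_univ,
    Finset.card_eq_sum_card_fiberwise (fun a _ => hc a)]
  refine Finset.sum_le_sum fun u hu => ?_
  calc (Finset.univ.filter fun a => c a = u).card
      = Fintype.card {a // c a = u} := (Fintype.card_subtype _).symm
    _ = Nat.card {a // c a = u} := (Nat.card_eq_fintype_card).symm
    _ ≤ f u := hf u hu

lemma misCount_split {V : Type*} [Fintype V] (G : SimpleGraph V) (v : V) :
    misCount G ≤ Nat.card {I : Set V // IsMaxIndepSet G I ∧ v ∈ I} +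
      Nat.card {I : Set V // IsMaxIndepSet G I ∧ v ∉ I} := by
  classical
  rw [misCount, ← Nat.card_sum]
  refine Nat.card_le_card_of_injective
    (fun p => if h : v ∈ p.1 then Sum.inl ⟨p.1, p.2, h⟩ else Sum.inr ⟨p.1, p.2, h⟩) ?_
  rintro ⟨I, hI⟩ ⟨I', hI'⟩ h
  by_cases h1 : v ∈ I <;> by_cases h2 : v ∈ I' <;>
    simp [h1, h2, Subtype.ext_iff] at h <;> simpa using h

lemma misCount_of_isEmpty {V : Type*} [Fintype V] [IsEmpty V] (G : SimpleGraph V) :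
    misCount G = 1 := by
  have hmis : IsMaxIndepSet G (∅ : Set V) :=
    ⟨by simp, fun J _ _ => Set.eq_empty_of_isEmpty J⟩
  have : Unique {I : Set V // IsMaxIndepSet G I} :=
    { default := ⟨∅, hmis⟩
      uniq := fun I => Subtype.ext (Set.eq_empty_of_isEmpty I.1) }
  simp [misCount, Nat.card_unique]

/-- Moon–Moser style bound: a graph on `k` vertices has at most `ellB k` MISes. -/
lemma moon_moser : ∀ (N : ℕ) (V : Type u) [Fintype V] (G : SimpleGraph V),
    Fintype.card V ≤ N → misCount G ≤ ellB (Fintype.card V) := by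
  intro N
  induction N with
  | zero =>
    intro V _ G hcard
    have : IsEmpty V := Fintype.card_eq_zero_iff.1 (Nat.le_zero.1 hcard)
    rw [misCount_of_isEmpty G, Nat.le_zero.1 hcard]
    simp [ellB]
  | succ N ih =>
    intro V _ G hcard
    classical
    rcases Nat.lt_or_ge (Fintype.card V) 1 with h0 | h1
    · have : IsEmpty V := Fintype.card_eq_zero_iff.1 (by omega)
      rw [misCount_of_isEmpty G]
      simp [ellB]
    -- pick a vertex of minimum degree
    have hne : (Finset.univ : Finset V).Nonempty := by
      rw [← Finset.card_pos, Finset.card_univ]; omega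
    obtain ⟨v, -, hvmin⟩ :=
      Finset.exists_min_image Finset.univ (fun u => (G.neighborSet u).ncard) hne
    set n := Fintype.card V with hn
    set d := (G.neighborSet v).ncard with hd
    -- the closed neighborhood of v as a Finset
    set Tset : Set V := G.neighborSet v ∪ {v} with hTset
    have hTfin : Tset.Finite := Set.toFinite _
    set T : Finset V := hTfin.toFinset with hT
    have hTncard : Tset.ncard = d + 1 := by
      rw [hTset, Set.ncard_union_eq (by simp [Set.disjoint_singleton_right])
        (Set.toFinite _) (Set.toFinite _), Set.ncard_singleton, hd]
    have hTcard : T.card = d + 1 := by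
      rw [hT, ← Set.ncard_eq_toFinset_card _ hTfin, hTncard]
    have hdn : d + 1 ≤ n := by
      have h := Set.ncard_le_ncard (Set.subset_univ Tset) (Set.toFinite _)
      rwa [Set.ncard_univ, Nat.card_eq_fintype_card, ← hn, hTncard] at h
    -- every MIS meets the closed neighborhood of v
    have hmeets : ∀ (I : Set V), IsMaxIndepSet G I → (I ∩ Tset).Nonempty := by
      intro I hI
      by_cases hv : v ∈ I
      · exact ⟨v, hv, by simp [hTset]⟩
      · obtain ⟨x, hxI, hadj⟩ := ((isMaxIndepSet_iff G I).1 hI).2 v hv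
        exact ⟨x, hxI, by simp [hTset, hadj]⟩
    -- classifying map: least element of I ∩ Tset
    letI : LinearOrder V := LinearOrder.lift'
      (fun x => ((Fintype.equivFin V) x : ℕ))
      (fun a b h => (Fintype.equivFin V).injective (Fin.val_injective h))
    set c : {I : Set V // IsMaxIndepSet G I} → V := fun p =>
      ((Set.toFinite (p.1 ∩ Tset)).toFinset).min' (by
        rw [Set.Finite.toFinset_nonempty]; exact hmeets p.1 p.2) with hc
    have hcmem : ∀ p : {I : Set V // IsMaxIndepSet G I},
        c p ∈ p.1 ∩ Tset := by
      intro p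
      have := ((Set.toFinite (p.1 ∩ Tset)).toFinset).min'_mem (by
        rw [Set.Finite.toFinset_nonempty]; exact hmeets p.1 p.2)
      rwa [Set.Finite.mem_toFinset] at this
    have hcT : ∀ p : {I : Set V // IsMaxIndepSet G I}, c p ∈ T := by
      intro p
      rw [hT, Set.Finite.mem_toFinset]
      exact (hcmem p).2
    -- main estimate
    have hmain : misCount G ≤ ∑ _u ∈ T, ellB (n - (d + 1)) := by
      refine nat_card_le_sum T c hcT _ (fun u hu => ?_)
      -- fiber at u injects into MISes containing u
      have hfiber : Nat.card {p : {I : Set V // IsMaxIndepSet G I} // c p = u} ≤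
          Nat.card {I : Set V // IsMaxIndepSet G I ∧ u ∈ I} := by
        refine Nat.card_le_card_of_injective
          (fun q => ⟨q.1.1, q.1.2, by have := hcmem q.1; rw [q.2] at this; exact this.1⟩) ?_
        rintro ⟨⟨I, hI⟩, hcu⟩ ⟨⟨I', hI'⟩, hcu'⟩ h
        simp only [Subtype.mk.injEq] at h ⊢
        exact h
      -- degree bound for u
      have hud : d ≤ (G.neighborSet u).ncard := hvmin u (Finset.mem_univ u)
      -- MISes containing u are at most the MIS count of the smaller graph
      have hsmall := card_mis_containing G u
      -- cardinality of the smaller graph's vertex set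
      set s : Set V := (G.neighborSet u ∪ {u})ᶜ with hs
      haveI : Fintype ↥s := Fintype.ofFinite _
      have hscard : Fintype.card ↥s = n - ((G.neighborSet u).ncard + 1) := by
        rw [fintype_card_coe_eq_ncard, hs, ncard_compl_eq,
          Set.ncard_union_eq (by simp [Set.disjoint_singleton_right])
            (Set.toFinite _) (Set.toFinite _), Set.ncard_singleton, hn]
      have hind := ih ↥s (G.induce s) (by omega)
      calc Nat.card {p : {I : Set V // IsMaxIndepSet G I} // c p = u}
          ≤ Nat.card {I : Set V // IsMaxIndepSet G I ∧ u ∈ I} := hfiber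
        _ ≤ misCount (G.induce s) := hsmall
        _ ≤ ellB (Fintype.card ↥s) := hind
        _ ≤ ellB (n - (d + 1)) := ellB_mono (by omega)
    rw [Finset.sum_const, hTcard, smul_eq_mul] at hmain
    calc misCount G ≤ (d + 1) * ellB (n - (d + 1)) := hmain
      _ ≤ ell n := mul_ellB_le (by omega) hdn
      _ ≤ ellB n := le_max_right _ _

/-- If a graph on `n ≥ 5` vertices has a vertex of degree at least `3`, then
`m(G) ≤ ell (n−1) + ell (n−4)`. -/
theorem misCount_le_of_degree_ge_three {V : Type*} [Fintype V] (G : SimpleGraph V) (n : ℕ)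
    (hn : Fintype.card V = n) (hn5 : 5 ≤ n) (hv : ∃ v : V, 3 ≤ (G.neighborSet v).ncard) :
    misCount G ≤ ell (n - 1) + ell (n - 4) := by
  classical
  obtain ⟨v, hdeg⟩ := hv
  set s1 : Set V := (G.neighborSet v ∪ {v})ᶜ with hs1
  set s2 : Set V := ({v} : Set V)ᶜ with hs2
  haveI : Fintype ↥s1 := Fintype.ofFinite _
  haveI : Fintype ↥s2 := Fintype.ofFinite _
  have hc1 : Fintype.card ↥s1 = n - ((G.neighborSet v).ncard + 1) := by
    rw [fintype_card_coe_eq_ncard, hs1, ncard_compl_eq,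
      Set.ncard_union_eq (by simp [Set.disjoint_singleton_right])
        (Set.toFinite _) (Set.toFinite _), Set.ncard_singleton, hn]
  have hc2 : Fintype.card ↥s2 = n - 1 := by
    rw [fintype_card_coe_eq_ncard, hs2, ncard_compl_eq, Set.ncard_singleton, hn]
  have hdle : (G.neighborSet v).ncard + 1 ≤ n := by
    have : (G.neighborSet v ∪ {v}).ncard ≤ n := by
      have h := Set.ncard_le_ncard (Set.subset_univ (G.neighborSet v ∪ {v})) (Set.toFinite _)
      rwa [Set.ncard_univ, Nat.card_eq_fintype_card, hn] at h
    rwa [Set.ncard_union_eq (by simp [Set.disjoint_singleton_right])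
      (Set.toFinite _) (Set.toFinite _), Set.ncard_singleton] at this
  calc misCount G
      ≤ Nat.card {I : Set V // IsMaxIndepSet G I ∧ v ∈ I} +
        Nat.card {I : Set V // IsMaxIndepSet G I ∧ v ∉ I} := misCount_split G v
    _ ≤ misCount (G.induce s1) + misCount (G.induce s2) :=
        Nat.add_le_add (card_mis_containing G v) (card_mis_avoiding G v)
    _ ≤ ellB (Fintype.card ↥s1) + ellB (Fintype.card ↥s2) :=
        Nat.add_le_add (moon_moser _ _ _ le_rfl) (moon_moser _ _ _ le_rfl)
    _ ≤ ellB (n - 4) + ellB (n - 1) :=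
        Nat.add_le_add (by rw [hc1]; exact ellB_mono (by omega))
          (by rw [hc2])
    _ = ell (n - 4) + ell (n - 1) := by
        rw [ellB_eq (by omega), ellB_eq (by omega)]
    _ = ell (n - 1) + ell (n - 4) := Nat.add_comm _ _
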